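/- Let φ : ℂ → ℂ be an entire function and let Γ = {(z, φ(z)) : z ∈ ℂ} ⊆ ℂ² be its graph. Given a point p = (p₁, p₂) ∈ ℂ² with p₂ ≠ φ(p₁) and a vector v ∈ ℂ², there exist a real number λ > 0 and a proper holomorphic map f : 𝔻 → ℂ² such that f(0) = p, f'(0) = λ·v, and f(𝔻) ∩ Γ = ∅. -/

import Mathlib

set_option maxHeartbeats 1000000
open Filter Finset

namespace PDisc

/-- ceiling constant -/
noncomputable def Cn (CB : ℝ) : ℕ := ⌈(12:ℝ) * CB⌉₊

/-- multiplier sequence -/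
noncomputable def Kf (CB : ℝ) (m : ℕ) : ℕ := 3 * m + Cn CB + 7

/-- lacunary exponents -/
noncomputable def NN (CB : ℝ) : ℕ → ℕ
  | 0 => 2
  | (m+1) => NN CB m * Kf CB (m+1)

/-- weights -/
noncomputable def nu (CB : ℝ) (k : ℕ) : ℝ := 12 * CB * 7 ^ k

variable {CB : ℝ} (hCB : 2 ≤ CB)

include hCB in
lemma Cn_ge : 24 ≤ Cn CB := by
  have : (24:ℝ) ≤ 12 * CB := by linarith
  have h := Nat.le_ceil ((12:ℝ) * CB)
  exact_mod_cast this.trans h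

lemma Kf_ge (m : ℕ) : 7 ≤ Kf CB m := by unfold Kf; omega

lemma NN_zero : NN CB 0 = 2 := rfl

lemma NN_succ (m : ℕ) : NN CB (m+1) = NN CB m * Kf CB (m+1) := rfl

lemma NN_pos (m : ℕ) : 0 < NN CB m := by
  induction m with
  | zero => norm_num [NN_zero]
  | succ n ih => rw [NN_succ]; exact Nat.mul_pos ih (lt_of_lt_of_le (by norm_num) (Kf_ge _))

lemma NN_ge_two (m : ℕ) : 2 ≤ NN CB m := by
  induction m with
  | zero => simp [NN_zero]
  | succ n ih =>
    rw [NN_succ]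
    calc 2 ≤ NN CB n := ih
    _ ≤ NN CB n * Kf CB (n+1) := Nat.le_mul_of_pos_right _ (lt_of_lt_of_le (by norm_num) (Kf_ge _))

lemma NN_succ_ge (m : ℕ) : 7 * NN CB m ≤ NN CB (m+1) := by
  rw [NN_succ, mul_comm]
  exact Nat.mul_le_mul_left _ (Kf_ge _)

lemma NN_mono : Monotone (NN CB) := by
  apply monotone_nat_of_le_succ
  intro n
  calc NN CB n ≤ 7 * NN CB n := by omega
  _ ≤ NN CB (n+1) := NN_succ_ge n

lemma NN_strict : StrictMono (NN CB) := by
  apply strictMono_nat_of_lt_succ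
  intro n
  have h1 := NN_succ_ge (CB := CB) n
  have h2 := NN_pos (CB := CB) n
  omega

lemma NN_ge_five_mul {m n : ℕ} (h : m < n) : 5 * NN CB m ≤ NN CB n := by
  have h1 : 5 * NN CB m ≤ 7 * NN CB m := by omega
  have h2 : 7 * NN CB m ≤ NN CB (m+1) := NN_succ_ge m
  exact (h1.trans h2).trans (NN_mono h)

lemma NN_ge_id (m : ℕ) : m + 2 ≤ NN CB m := by
  induction m with
  | zero => simp [NN_zero]
  | succ n ih =>
    have := NN_succ_ge (CB := CB) n
    omega

lemma NN_ge_pow (m : ℕ) : 7 ^ m ≤ NN CB m := by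
  induction m with
  | zero => simp [NN_zero]
  | succ n ih =>
    have h := NN_succ_ge (CB := CB) n
    calc 7 ^ (n+1) = 7 * 7 ^ n := by ring
    _ ≤ 7 * NN CB n := by omega
    _ ≤ NN CB (n+1) := h

include hCB in
lemma nu_pos (k : ℕ) : 0 < nu CB k := by
  unfold nu
  have h : (0:ℝ) < CB := by linarith
  positivity

lemma nu_le_cn (k : ℕ) : nu CB k ≤ (Cn CB : ℝ) * 7 ^ k := by
  unfold nu
  have h := Nat.le_ceil ((12:ℝ) * CB)
  have h7 : (0:ℝ) ≤ (7:ℝ) ^ k := by positivity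
  exact mul_le_mul_of_nonneg_right h h7

include hCB in
/-- key power inequality: `(6 + 2 ν m) 2^m ≤ 3 ^ (Kf m)` -/
lemma key3pow (m : ℕ) : (6 + 2 * nu CB m) * 2 ^ m ≤ (3:ℝ) ^ (Kf CB m) := by
  have hcb0 : (0:ℝ) ≤ CB := by linarith
  have h1 : (6 + 2 * nu CB m) ≤ 30 * CB * 7 ^ m := by
    unfold nu
    have h7 : (1:ℝ) ≤ 7 ^ m := one_le_pow₀ (by norm_num)
    nlinarith
  have hCn : (30:ℝ) * CB ≤ 3 ^ (Cn CB + 7) := by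
    have h2 : (12:ℝ) * CB ≤ (Cn CB : ℝ) := Nat.le_ceil _
    have h3 : (Cn CB : ℝ) ≤ 3 ^ (Cn CB) := by
      exact_mod_cast (Nat.lt_pow_self (by norm_num) (n := Cn CB)).le
    have h4 : (3:ℝ) ^ (Cn CB + 7) = 3 ^ (Cn CB) * 2187 := by rw [pow_add]; norm_num
    nlinarith
  have h5 : (7:ℝ) ^ m * 2 ^ m ≤ 3 ^ (3 * m) := by
    have : (7:ℝ) ^ m * 2 ^ m = 14 ^ m := by rw [← mul_pow]; norm_num
    rw [this, pow_mul]
    exact pow_le_pow_left₀ (by norm_num) (by norm_num) m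
  have h6 : (3:ℝ) ^ (Kf CB m) = 3 ^ (3 * m) * 3 ^ (Cn CB + 7) := by
    unfold Kf; rw [← pow_add]; ring_nf
  have h30 : (0:ℝ) ≤ 30 * CB := by linarith
  have h7m : (0:ℝ) < 7 ^ m := by positivity
  have h2m : (0:ℝ) < 2 ^ m := by positivity
  have h3m : (0:ℝ) < (3:ℝ) ^ (3*m) := by positivity
  calc (6 + 2 * nu CB m) * 2 ^ m ≤ 30 * CB * 7 ^ m * 2 ^ m := by
        apply mul_le_mul_of_nonneg_right h1 h2m.le
  _ = 30 * CB * (7 ^ m * 2 ^ m) := by ring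
  _ ≤ 3 ^ (Cn CB + 7) * 3 ^ (3 * m) := by nlinarith
  _ = (3:ℝ) ^ (Kf CB m) := by rw [h6]; ring

/-! ### Function definitions -/

noncomputable def fac (CB : ℝ) (ζ : ℂ) (m : ℕ) : ℂ := 1 + 6 * ζ ^ (NN CB m)

noncomputable def Q (CB : ℝ) (k : ℕ) (ζ : ℂ) : ℂ := ∏ m ∈ range k, fac CB ζ m

noncomputable def Aterm (CB : ℝ) (k : ℕ) (ζ : ℂ) : ℂ := Q CB k ζ * (6 * ζ ^ (NN CB k))

noncomputable def Pser (CB : ℝ) (ζ : ℂ) : ℂ := 1 + ∑' k, Aterm CB k ζ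

noncomputable def psi (CB : ℝ) (k : ℕ) (ζ : ℂ) : ℂ := -(ζ ^ (NN CB k)) / (1 + ζ ^ (NN CB k))

noncomputable def Bterm (CB : ℝ) (k : ℕ) (ζ : ℂ) : ℂ := (nu CB k : ℂ) * psi CB k ζ

noncomputable def Tser (CB : ℝ) (ζ : ℂ) : ℂ := ∑' k, Bterm CB k ζ

/-! ### Summability and bounds -/

lemma summable_pow_NN {r : ℝ} (hr0 : 0 ≤ r) (hr1 : r < 1) :
    Summable (fun k => r ^ (NN CB k)) := by
  refine Summable.of_nonneg_of_le (fun k => by positivity) (fun k => ?_)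
    (summable_geometric_of_lt_one hr0 hr1)
  have hk : k ≤ NN CB k := by have := NN_ge_id (CB := CB) k; omega
  exact pow_le_pow_of_le_one hr0 hr1.le hk

lemma summable_NN_pow_NN {r : ℝ} (hr0 : 0 ≤ r) (hr1 : r < 1) :
    Summable (fun k => (NN CB k : ℝ) * r ^ (NN CB k)) := by
  have h : Summable (fun n : ℕ => (n:ℝ) ^ 1 * r ^ n) := by
    apply summable_pow_mul_geometric_of_norm_lt_one
    rwa [Real.norm_eq_abs, abs_of_nonneg hr0]
  have h2 := h.comp_injective (NN_strict (CB := CB)).injective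
  simpa [Function.comp_def] using h2

lemma Q_bound {r : ℝ} (hr0 : 0 ≤ r) (hr1 : r < 1) (k : ℕ) {ζ : ℂ} (hζ : ‖ζ‖ ≤ r) :
    ‖Q CB k ζ‖ ≤ Real.exp (6 * (1 - r)⁻¹) := by
  have hz0 : 0 ≤ ‖ζ‖ := norm_nonneg _
  rw [Q, norm_prod]
  have h1 : ∀ m ∈ range k, ‖fac CB ζ m‖ ≤ Real.exp (6 * r ^ m) := by
    intro m _
    have hnle : ‖ζ‖ ^ (NN CB m) ≤ r ^ m := by
      calc ‖ζ‖ ^ (NN CB m) ≤ ‖ζ‖ ^ m :=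
            pow_le_pow_of_le_one hz0 (hζ.trans hr1.le)
              (by have := NN_ge_id (CB := CB) m; omega)
      _ ≤ r ^ m := pow_le_pow_left₀ hz0 hζ m
    calc ‖fac CB ζ m‖ ≤ 1 + 6 * ‖ζ‖ ^ (NN CB m) := by
          rw [fac]
          refine (norm_add_le _ _).trans ?_
          simp [norm_pow]
    _ ≤ 1 + 6 * r ^ m := by nlinarith
    _ ≤ Real.exp (6 * r ^ m) := by
          have := Real.add_one_le_exp (6 * r ^ m)
          linarith
  calc ∏ m ∈ range k, ‖fac CB ζ m‖ ≤ ∏ m ∈ range k, Real.exp (6 * r ^ m) :=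
        Finset.prod_le_prod (fun m _ => norm_nonneg _) h1
  _ = Real.exp (∑ m ∈ range k, 6 * r ^ m) := by rw [Real.exp_sum]
  _ ≤ Real.exp (6 * (1 - r)⁻¹) := by
        apply Real.exp_le_exp.mpr
        rw [← Finset.mul_sum]
        have hs : ∑ m ∈ range k, r ^ m ≤ (1 - r)⁻¹ := by
          have h2 := Summable.sum_le_tsum (range k) (fun m _ => by positivity)
            (summable_geometric_of_lt_one hr0 hr1)
          rwa [tsum_geometric_of_lt_one hr0 hr1] at h2
        nlinarith
  
lemma Aterm_bound {r : ℝ} (hr0 : 0 ≤ r) (hr1 : r < 1) (k : ℕ) {ζ : ℂ} (hζ : ‖ζ‖ ≤ r) :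
    ‖Aterm CB k ζ‖ ≤ Real.exp (6 * (1 - r)⁻¹) * 6 * r ^ (NN CB k) := by
  have hz0 : 0 ≤ ‖ζ‖ := norm_nonneg _
  rw [Aterm, norm_mul]
  have h2 : ‖6 * ζ ^ (NN CB k)‖ ≤ 6 * r ^ (NN CB k) := by
    rw [norm_mul, norm_pow]
    have : ‖(6:ℂ)‖ = 6 := by norm_num
    rw [this]
    have := pow_le_pow_left₀ hz0 hζ (NN CB k)
    nlinarith
  have h1 := Q_bound (CB := CB) hr0 hr1 k hζ
  have hq0 : 0 ≤ ‖Q CB k ζ‖ := norm_nonneg _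
  have he : (0:ℝ) < Real.exp (6 * (1-r)⁻¹) := Real.exp_pos _
  calc ‖Q CB k ζ‖ * ‖6 * ζ ^ (NN CB k)‖ ≤ Real.exp (6 * (1 - r)⁻¹) * (6 * r ^ (NN CB k)) := by
        apply mul_le_mul h1 h2 (norm_nonneg _) he.le
  _ = Real.exp (6 * (1 - r)⁻¹) * 6 * r ^ (NN CB k) := by ring

lemma one_add_pow_ne {ζ : ℂ} (hζ : ‖ζ‖ < 1) (n : ℕ) (hn : 0 < n) : 1 + ζ ^ n ≠ 0 := by
  intro h
  have h1 : ζ ^ n = -1 := by linear_combination h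
  have : ‖ζ ^ n‖ = 1 := by rw [h1]; simp
  rw [norm_pow] at this
  have h2 : ‖ζ‖ ^ n < 1 := pow_lt_one₀ (norm_nonneg _) hζ hn.ne'
  linarith

lemma norm_one_add_pow_ge {ζ : ℂ} (hζ : ‖ζ‖ < 1) (n : ℕ) :
    1 - ‖ζ‖ ^ n ≤ ‖1 + ζ ^ n‖ := by
  have h := norm_sub_le (1 + ζ ^ n) (ζ ^ n)
  have h2 : ‖(1 + ζ ^ n) - ζ ^ n‖ = 1 := by norm_num
  rw [h2] at h
  rw [← norm_pow]
  linarith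

lemma psi_bound {r : ℝ} (hr1 : r < 1) (k : ℕ) {ζ : ℂ} (hζ : ‖ζ‖ ≤ r) :
    ‖psi CB k ζ‖ ≤ ‖ζ‖ ^ (NN CB k) * (1 - r)⁻¹ := by
  have hz1 : ‖ζ‖ < 1 := lt_of_le_of_lt hζ hr1
  have hz0 : 0 ≤ ‖ζ‖ := norm_nonneg _
  have hr0 : 0 ≤ r := hz0.trans hζ
  have hd : 1 - r ≤ ‖1 + ζ ^ (NN CB k)‖ := by
    refine le_trans ?_ (norm_one_add_pow_ge hz1 (NN CB k))
    have : ‖ζ‖ ^ (NN CB k) ≤ r := by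
      calc ‖ζ‖ ^ (NN CB k) ≤ ‖ζ‖ ^ 1 := pow_le_pow_of_le_one hz0 hz1.le (NN_pos (CB := CB) k)
      _ = ‖ζ‖ := pow_one _
      _ ≤ r := hζ
    linarith
  rw [psi, norm_div, norm_neg, norm_pow]
  have h : (0:ℝ) < 1 - r := by linarith
  rw [div_le_iff₀ (lt_of_lt_of_le h hd)]
  calc ‖ζ‖ ^ (NN CB k)
      = ‖ζ‖ ^ (NN CB k) * ((1-r)⁻¹ * (1-r)) := by
        rw [inv_mul_cancel₀ h.ne', mul_one]
  _ ≤ ‖ζ‖ ^ (NN CB k) * (1 - r)⁻¹ * ‖1 + ζ ^ (NN CB k)‖ := by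
        rw [mul_assoc]
        apply mul_le_mul_of_nonneg_left _ (by positivity)
        apply mul_le_mul_of_nonneg_left hd (by positivity)

include hCB in
lemma Bterm_bound {r : ℝ} (hr1 : r < 1) (k : ℕ) {ζ : ℂ} (hζ : ‖ζ‖ ≤ r) :
    ‖Bterm CB k ζ‖ ≤ (Cn CB : ℝ) * ((NN CB k : ℝ) * r ^ (NN CB k)) * (1 - r)⁻¹ := by
  have hz0 : 0 ≤ ‖ζ‖ := norm_nonneg _
  have hr0 : 0 ≤ r := hz0.trans hζ
  rw [Bterm, norm_mul]
  have h1 : ‖((nu CB k : ℝ) : ℂ)‖ = nu CB k := by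
    rw [Complex.norm_real, Real.norm_eq_abs, abs_of_pos (nu_pos hCB k)]
  rw [h1]
  have h2 := psi_bound (CB := CB) hr1 k hζ
  have h3 : nu CB k ≤ (Cn CB : ℝ) * (NN CB k : ℝ) := by
    refine (nu_le_cn (CB := CB) k).trans ?_
    have h4 : (7:ℝ) ^ k ≤ (NN CB k : ℝ) := by exact_mod_cast NN_ge_pow (CB := CB) k
    have : (0:ℝ) ≤ (Cn CB : ℝ) := Nat.cast_nonneg _
    nlinarith
  have h5 : ‖ζ‖ ^ (NN CB k) ≤ r ^ (NN CB k) := pow_le_pow_left₀ hz0 hζ _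
  have h6 : (0:ℝ) ≤ (1-r)⁻¹ := by
    have : (0:ℝ) < 1 - r := by linarith
    positivity
  have h7 : 0 ≤ nu CB k := (nu_pos hCB k).le
  calc nu CB k * ‖psi CB k ζ‖ ≤ nu CB k * (r ^ (NN CB k) * (1-r)⁻¹) := by
        apply mul_le_mul_of_nonneg_left _ h7
        refine h2.trans ?_
        apply mul_le_mul_of_nonneg_right h5 h6
  _ ≤ (Cn CB : ℝ) * (NN CB k : ℝ) * (r ^ (NN CB k) * (1-r)⁻¹) := by
        apply mul_le_mul_of_nonneg_right h3 (by positivity)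
  _ = (Cn CB : ℝ) * ((NN CB k : ℝ) * r ^ (NN CB k)) * (1 - r)⁻¹ := by ring

include hCB in
lemma summable_Bterm_norm {ζ : ℂ} (hζ : ‖ζ‖ < 1) : Summable (fun k => ‖Bterm CB k ζ‖) := by
  apply Summable.of_nonneg_of_le (fun k => norm_nonneg _)
    (fun k => Bterm_bound hCB hζ k (le_refl _))
  apply Summable.mul_right
  apply Summable.mul_left
  exact summable_NN_pow_NN (norm_nonneg _) hζ

include hCB in
lemma summable_Bterm {ζ : ℂ} (hζ : ‖ζ‖ < 1) : Summable (fun k => Bterm CB k ζ) :=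
  (summable_Bterm_norm hCB hζ).of_norm

lemma summable_Aterm_norm {ζ : ℂ} (hζ : ‖ζ‖ < 1) : Summable (fun k => ‖Aterm CB k ζ‖) := by
  apply Summable.of_nonneg_of_le (fun k => norm_nonneg _)
    (fun k => Aterm_bound (CB := CB) (norm_nonneg ζ) hζ k (le_refl _))
  apply Summable.mul_left
  exact summable_pow_NN (norm_nonneg _) hζ

lemma summable_Aterm {ζ : ℂ} (hζ : ‖ζ‖ < 1) : Summable (fun k => Aterm CB k ζ) :=
  (summable_Aterm_norm (CB := CB) hζ).of_norm

/-! ### Holomorphy -/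

lemma diffOn_tsum (F : ℕ → ℂ → ℂ)
    (hF : ∀ k, DifferentiableOn ℂ (F k) (Metric.ball 0 1))
    (u : ℝ → ℕ → ℝ) (hu : ∀ r : ℝ, 0 ≤ r → r < 1 → Summable (u r))
    (hb : ∀ r : ℝ, 0 ≤ r → r < 1 → ∀ k, ∀ ζ : ℂ, ‖ζ‖ ≤ r → ‖F k ζ‖ ≤ u r k) :
    DifferentiableOn ℂ (fun ζ => ∑' k, F k ζ) (Metric.ball (0:ℂ) 1) := by
  intro ζ₀ hζ₀
  rw [Metric.mem_ball, dist_zero_right] at hζ₀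
  set r : ℝ := (1 + ‖ζ₀‖)/2 with hrdef
  have hr1 : r < 1 := by rw [hrdef]; linarith
  have hr0 : (0:ℝ) ≤ r := by rw [hrdef]; positivity
  have hζr : ‖ζ₀‖ < r := by rw [hrdef]; linarith
  have tuo := tendstoUniformlyOn_tsum (hu r hr0 hr1) (s := Metric.closedBall (0:ℂ) r)
    (f := F) (fun k x hx => hb r hr0 hr1 k x
      (by rwa [Metric.mem_closedBall, dist_zero_right] at hx))
  have hsub : Metric.ball (0:ℂ) r ⊆ Metric.ball 0 1 := Metric.ball_subset_ball (by linarith)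
  have hdiff : DifferentiableOn ℂ (fun ζ => ∑' k, F k ζ) (Metric.ball (0:ℂ) r) := by
    apply TendstoLocallyUniformlyOn.differentiableOn
      ((tuo.mono Metric.ball_subset_closedBall).tendstoLocallyUniformlyOn)
    · filter_upwards with t
      exact DifferentiableOn.fun_sum (fun k _ => ((hF k).mono hsub))
    · exact Metric.isOpen_ball
  exact ((hdiff.differentiableAt (Metric.isOpen_ball.mem_nhds
    (by rwa [Metric.mem_ball, dist_zero_right]))).differentiableWithinAt)

lemma fac_diff (m : ℕ) : Differentiable ℂ (fun ζ => fac CB ζ m) := by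
  unfold fac
  exact (differentiable_const _).add ((differentiable_pow _).const_mul _)

lemma Q_diff (k : ℕ) : Differentiable ℂ (Q CB k) := by
  induction k with
  | zero =>
    have : Q CB 0 = fun _ => (1:ℂ) := by funext ζ; simp [Q]
    rw [this]
    exact differentiable_const _
  | succ n ih =>
    have : Q CB (n+1) = fun ζ => Q CB n ζ * fac CB ζ n := by
      funext ζ; rw [Q, Q, prod_range_succ]
    rw [this]
    exact ih.mul (fac_diff n)

lemma Aterm_diff (k : ℕ) : Differentiable ℂ (fun ζ => Aterm CB k ζ) := by
  unfold Aterm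
  exact (Q_diff k).mul (((differentiable_pow _).const_mul _))

lemma psi_diffOn (k : ℕ) : DifferentiableOn ℂ (fun ζ => psi CB k ζ) (Metric.ball 0 1) := by
  unfold psi
  apply DifferentiableOn.div
  · exact (((differentiable_pow _)).neg).differentiableOn
  · exact ((differentiable_const _).add (differentiable_pow _)).differentiableOn
  · intro ζ hζ
    rw [Metric.mem_ball, dist_zero_right] at hζ
    exact one_add_pow_ne hζ _ (NN_pos _)

lemma Pser_diffOn : DifferentiableOn ℂ (Pser CB) (Metric.ball 0 1) := by
  unfold Pser
  apply DifferentiableOn.add (differentiableOn_const _)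
  apply diffOn_tsum (u := fun r k => Real.exp (6 * (1 - r)⁻¹) * 6 * r ^ (NN CB k))
  · exact fun k => (Aterm_diff k).differentiableOn
  · intro r hr0 hr1
    have := (summable_pow_NN (CB := CB) hr0 hr1).mul_left (Real.exp (6 * (1 - r)⁻¹) * 6)
    simpa [mul_assoc] using this
  · intro r hr0 hr1 k ζ hζ
    exact Aterm_bound hr0 hr1 k hζ

include hCB in
lemma Tser_diffOn : DifferentiableOn ℂ (Tser CB) (Metric.ball 0 1) := by
  unfold Tser
  apply diffOn_tsum (u := fun r k => (Cn CB : ℝ) * ((NN CB k : ℝ) * r ^ (NN CB k)) * (1 - r)⁻¹)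
  · intro k
    unfold Bterm
    exact (psi_diffOn k).const_mul _
  · intro r hr0 hr1
    have := ((summable_NN_pow_NN (CB := CB) hr0 hr1).mul_left (Cn CB : ℝ)).mul_right (1 - r)⁻¹
    simpa [mul_assoc] using this
  · intro r hr0 hr1 k ζ hζ
    exact Bterm_bound hCB hr1 k hζ

/-! ### Values and bounds near 0 -/

lemma Pser_zero : Pser CB 0 = 1 := by
  unfold Pser
  have h : ∀ k, Aterm CB k (0:ℂ) = 0 := by
    intro k
    unfold Aterm
    rw [zero_pow (NN_pos (CB := CB) k).ne']
    ring
  rw [tsum_congr h, tsum_zero, add_zero]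

lemma Tser_zero : Tser CB 0 = 0 := by
  unfold Tser
  have h : ∀ k, Bterm CB k (0:ℂ) = 0 := by
    intro k
    unfold Bterm psi
    rw [zero_pow (NN_pos (CB := CB) k).ne']
    ring
  rw [tsum_congr h, tsum_zero]

lemma pow_le_sq {x : ℝ} (hx0 : 0 ≤ x) (hx : x ≤ 1/2) {n : ℕ} (hn : 2 ≤ n) :
    x ^ n ≤ x ^ 2 * (4 * (1/2) ^ n) := by
  obtain ⟨m, rfl⟩ : ∃ m, n = m + 2 := ⟨n - 2, by omega⟩
  rw [pow_add]
  have h1 : x ^ m ≤ (1/2:ℝ) ^ m := pow_le_pow_left₀ hx0 hx m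
  have h2 : (4:ℝ) * (1/2) ^ (m+2) = (1/2) ^ m := by rw [pow_add]; ring
  rw [h2]
  have := pow_nonneg hx0 2
  nlinarith [pow_nonneg hx0 m, pow_nonneg (by norm_num : (0:ℝ) ≤ (1/2:ℝ)) m]

lemma Pser_sub_one_bound :
    ∃ C : ℝ, 0 ≤ C ∧ ∀ ζ : ℂ, ‖ζ‖ ≤ 1/2 → ‖Pser CB ζ - 1‖ ≤ C * ‖ζ‖ ^ 2 := by
  have hsc : Summable (fun k => Real.exp 12 * 6 * (4 * (1/2:ℝ) ^ (NN CB k))) := by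
    have := (summable_pow_NN (CB := CB) (r := 1/2) (by norm_num) (by norm_num)).mul_left
      (Real.exp 12 * 6 * 4)
    simpa [mul_assoc] using this
  refine ⟨∑' k, Real.exp 12 * 6 * (4 * (1/2:ℝ) ^ (NN CB k)),
    tsum_nonneg (fun k => by positivity), ?_⟩
  intro ζ hζ
  have hz0 : 0 ≤ ‖ζ‖ := norm_nonneg _
  have hz1 : ‖ζ‖ < 1 := lt_of_le_of_lt hζ (by norm_num)
  have hterm : ∀ k, ‖Aterm CB k ζ‖ ≤ Real.exp 12 * 6 * (4 * (1/2:ℝ) ^ (NN CB k)) * ‖ζ‖ ^ 2 := by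
    intro k
    have h1 := Aterm_bound (CB := CB) hz0 hz1 k (le_refl _)
    have h2 : Real.exp (6 * (1 - ‖ζ‖)⁻¹) ≤ Real.exp 12 := by
      apply Real.exp_le_exp.mpr
      have h3 : (1:ℝ)/2 ≤ 1 - ‖ζ‖ := by linarith
      have h4 : (1 - ‖ζ‖)⁻¹ ≤ 2 := by
        rw [inv_le_comm₀ (by linarith) (by norm_num)]
        linarith
      linarith
    have h5 : ‖ζ‖ ^ (NN CB k) ≤ ‖ζ‖ ^ 2 * (4 * (1/2:ℝ) ^ (NN CB k)) :=
      pow_le_sq hz0 hζ (NN_ge_two k)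
    have he : (0:ℝ) < Real.exp (6 * (1 - ‖ζ‖)⁻¹) := Real.exp_pos _
    calc ‖Aterm CB k ζ‖ ≤ Real.exp (6 * (1 - ‖ζ‖)⁻¹) * 6 * ‖ζ‖ ^ (NN CB k) := h1
    _ ≤ Real.exp 12 * 6 * (‖ζ‖ ^ 2 * (4 * (1/2:ℝ) ^ (NN CB k))) := by
          apply mul_le_mul (by nlinarith [Real.exp_pos (12:ℝ)]) h5 (by positivity) (by positivity)
    _ = Real.exp 12 * 6 * (4 * (1/2:ℝ) ^ (NN CB k)) * ‖ζ‖ ^ 2 := by ring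
  have hsum := summable_Aterm_norm (CB := CB) hz1
  have h6 : ‖Pser CB ζ - 1‖ ≤ ∑' k, ‖Aterm CB k ζ‖ := by
    unfold Pser
    rw [add_sub_cancel_left]
    exact norm_tsum_le_tsum_norm hsum
  have hsc2 : Summable (fun k => Real.exp 12 * 6 * (4 * (1/2:ℝ) ^ (NN CB k)) * ‖ζ‖ ^ 2) :=
    hsc.mul_right _
  calc ‖Pser CB ζ - 1‖ ≤ ∑' k, ‖Aterm CB k ζ‖ := h6
  _ ≤ ∑' k, Real.exp 12 * 6 * (4 * (1/2:ℝ) ^ (NN CB k)) * ‖ζ‖ ^ 2 :=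
        Summable.tsum_le_tsum hterm hsum hsc2
  _ = (∑' k, Real.exp 12 * 6 * (4 * (1/2:ℝ) ^ (NN CB k))) * ‖ζ‖ ^ 2 := by
        rw [tsum_mul_right]

include hCB in
lemma Tser_bound :
    ∃ C : ℝ, 0 ≤ C ∧ ∀ ζ : ℂ, ‖ζ‖ ≤ 1/2 → ‖Tser CB ζ‖ ≤ C * ‖ζ‖ ^ 2 := by
  have hsc : Summable (fun k => nu CB k * 2 * (4 * (1/2:ℝ) ^ (NN CB k))) := by
    apply Summable.of_nonneg_of_le
      (fun k => mul_nonneg (mul_nonneg (nu_pos hCB k).le (by norm_num)) (by positivity))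
      (fun k => ?_) (((summable_NN_pow_NN (CB := CB) (r := 1/2) (by norm_num)
        (by norm_num)).mul_left ((Cn CB : ℝ) * 8)))
    have h3 : nu CB k ≤ (Cn CB : ℝ) * (NN CB k : ℝ) := by
      refine (nu_le_cn (CB := CB) k).trans ?_
      have h4 : (7:ℝ) ^ k ≤ (NN CB k : ℝ) := by exact_mod_cast NN_ge_pow (CB := CB) k
      have : (0:ℝ) ≤ (Cn CB : ℝ) := Nat.cast_nonneg _
      nlinarith
    have h5 : (0:ℝ) ≤ (1/2:ℝ) ^ (NN CB k) := by positivity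
    have h6 : (0:ℝ) ≤ (NN CB k : ℝ) := Nat.cast_nonneg _
    have h7 : (0:ℝ) ≤ nu CB k := (nu_pos hCB k).le
    nlinarith
  refine ⟨∑' k, nu CB k * 2 * (4 * (1/2:ℝ) ^ (NN CB k)),
    tsum_nonneg (fun k => mul_nonneg (mul_nonneg (nu_pos hCB k).le (by norm_num))
      (by positivity)), ?_⟩
  intro ζ hζ
  have hz0 : 0 ≤ ‖ζ‖ := norm_nonneg _
  have hz1 : ‖ζ‖ < 1 := lt_of_le_of_lt hζ (by norm_num)
  have hterm : ∀ k, ‖Bterm CB k ζ‖ ≤ nu CB k * 2 * (4 * (1/2:ℝ) ^ (NN CB k)) * ‖ζ‖ ^ 2 := by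
    intro k
    have hnupos := nu_pos hCB k
    have h1 : ‖Bterm CB k ζ‖ ≤ nu CB k * (‖ζ‖ ^ (NN CB k) * (1 - ‖ζ‖)⁻¹) := by
      unfold Bterm
      rw [norm_mul]
      have h1' : ‖((nu CB k : ℝ) : ℂ)‖ = nu CB k := by
        rw [Complex.norm_real, Real.norm_eq_abs, abs_of_pos hnupos]
      rw [h1']
      exact mul_le_mul_of_nonneg_left (psi_bound hz1 k (le_refl _)) hnupos.le
    have h4 : (1 - ‖ζ‖)⁻¹ ≤ 2 := by
      rw [inv_le_comm₀ (by linarith) (by norm_num)]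
      linarith
    have h5 : ‖ζ‖ ^ (NN CB k) ≤ ‖ζ‖ ^ 2 * (4 * (1/2:ℝ) ^ (NN CB k)) :=
      pow_le_sq hz0 hζ (NN_ge_two k)
    have h6 : (0:ℝ) ≤ ‖ζ‖ ^ (NN CB k) := by positivity
    calc ‖Bterm CB k ζ‖ ≤ nu CB k * (‖ζ‖ ^ (NN CB k) * (1 - ‖ζ‖)⁻¹) := h1
    _ ≤ nu CB k * (‖ζ‖ ^ 2 * (4 * (1/2:ℝ) ^ (NN CB k)) * 2) := by
          apply mul_le_mul_of_nonneg_left _ hnupos.le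
          have h7 : ‖ζ‖ ^ (NN CB k) * (1 - ‖ζ‖)⁻¹ ≤ ‖ζ‖ ^ (NN CB k) * 2 := by
            apply mul_le_mul_of_nonneg_left h4 h6
          refine h7.trans ?_
          nlinarith
    _ = nu CB k * 2 * (4 * (1/2:ℝ) ^ (NN CB k)) * ‖ζ‖ ^ 2 := by ring
  have hsum := summable_Bterm_norm hCB hz1
  have h6 : ‖Tser CB ζ‖ ≤ ∑' k, ‖Bterm CB k ζ‖ := norm_tsum_le_tsum_norm hsum
  calc ‖Tser CB ζ‖ ≤ ∑' k, ‖Bterm CB k ζ‖ := h6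
  _ ≤ ∑' k, nu CB k * 2 * (4 * (1/2:ℝ) ^ (NN CB k)) * ‖ζ‖ ^ 2 :=
        Summable.tsum_le_tsum hterm hsum (hsc.mul_right _)
  _ = (∑' k, nu CB k * 2 * (4 * (1/2:ℝ) ^ (NN CB k))) * ‖ζ‖ ^ 2 := by
        rw [tsum_mul_right]

/-! ### Pointwise real-part estimates for `psi` -/

lemma normSq_expand (u : ℂ) : Complex.normSq (1 + u) = 1 + 2*u.re + Complex.normSq u := by
  simp [Complex.normSq_apply, Complex.add_re, Complex.add_im]
  ring

lemma psi_re_lower {u : ℂ} (hu : ‖u‖ < 1) : (-1/2 : ℝ) ≤ (-u/(1+u)).re := by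
  have hne : (1:ℂ) + u ≠ 0 := by
    intro h
    have h1 : u = -1 := by linear_combination h
    rw [h1] at hu
    simp at hu
  have hpos : 0 < Complex.normSq (1+u) := Complex.normSq_pos.mpr hne
  have hs : Complex.normSq u < 1 := by
    rw [Complex.normSq_eq_norm_sq]
    calc ‖u‖^2 < 1^2 := by nlinarith [norm_nonneg u]
    _ = 1 := one_pow 2
  rw [Complex.div_re, ← add_div, div_le_div_iff₀ (by norm_num) hpos]
  have he : Complex.normSq (1+u) = 1 + 2*u.re + Complex.normSq u := normSq_expand u
  have hn : Complex.normSq u = u.re^2 + u.im^2 := by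
    simp [Complex.normSq_apply]; ring
  simp only [Complex.neg_re, Complex.neg_im, Complex.add_re, Complex.add_im,
    Complex.one_re, Complex.one_im]
  nlinarith [hs, he, hn, hpos]

lemma psi_re_big {u : ℂ} (h : ‖1 + 6*u‖ ≤ 1/10) : (1/6 : ℝ) ≤ (-u/(1+u)).re := by
  have h6 : ‖(6:ℂ)*u‖ = 6*‖u‖ := by
    rw [norm_mul]; norm_num
  have hub : ‖u‖ ≤ 11/60 := by
    have h1 : ‖(6:ℂ)*u‖ ≤ ‖1+6*u‖ + 1 := by
      have := norm_sub_le (1+6*u) 1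
      simpa using this
    rw [h6] at h1
    linarith
  have hlb : (9:ℝ)/10 ≤ 6*‖u‖ := by
    have h2 := norm_sub_le ((1:ℂ)+6*u) (6*u)
    have h3 : ((1:ℂ)+6*u) - 6*u = 1 := by ring
    rw [h3, norm_one, h6] at h2
    linarith
  have hsq : Complex.normSq (1+6*u) ≤ 1/100 := by
    rw [Complex.normSq_eq_norm_sq]
    nlinarith [norm_nonneg (1+6*u)]
  have hexp : Complex.normSq (1+6*u) = 1 + 12*u.re + 36*Complex.normSq u := by
    have := normSq_expand (6*u)
    simp only [Complex.normSq_mul] at this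
    have h2 : ((6:ℂ)*u).re = 6*u.re := by simp
    rw [h2] at this
    have h3 : Complex.normSq (6:ℂ) = 36 := by
      simp [Complex.normSq_apply]; norm_num
    rw [h3] at this
    convert this using 2
    ring
  have hnlow : (81:ℝ)/100 ≤ 36 * Complex.normSq u := by
    have : Complex.normSq u = ‖u‖^2 := by
      rw [Complex.normSq_eq_norm_sq]
    rw [this]
    nlinarith
  have hnub : Complex.normSq u ≤ (11/60)^2 := by
    have : Complex.normSq u = ‖u‖^2 := by
      rw [Complex.normSq_eq_norm_sq]
    rw [this]
    nlinarith [norm_nonneg u]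
  have hn : Complex.normSq u = u.re^2 + u.im^2 := by
    simp [Complex.normSq_apply]; ring
  have hdpos : 0 < Complex.normSq (1+u) := by
    rw [normSq_expand]
    nlinarith [sq_nonneg (u.re + 1/5), hn, sq_nonneg u.im]
  rw [Complex.div_re, ← add_div, le_div_iff₀ hdpos]
  have he : Complex.normSq (1+u) = 1 + 2*u.re + Complex.normSq u := normSq_expand u
  simp only [Complex.neg_re, Complex.neg_im, Complex.add_re, Complex.add_im,
    Complex.one_re, Complex.one_im]
  nlinarith [hexp, hsq, hnlow, he, hn]

/-! ### Weierstrass-type product bound and geometric tails -/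

lemma prod_ge_one_sub_sum (s : Finset ℕ) (ε : ℕ → ℝ)
    (h0 : ∀ m ∈ s, 0 ≤ ε m) (h1 : ∀ m ∈ s, ε m ≤ 1) :
    1 - ∑ m ∈ s, ε m ≤ ∏ m ∈ s, (1 - ε m) := by
  induction s using Finset.cons_induction with
  | empty => simp
  | cons a s ha ih =>
    rw [Finset.prod_cons, Finset.sum_cons]
    have iha := ih (fun m hm => h0 m (Finset.mem_cons_of_mem hm))
      (fun m hm => h1 m (Finset.mem_cons_of_mem hm))
    have ha0 : 0 ≤ ε a := h0 a (Finset.mem_cons_self a s)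
    have ha1 : ε a ≤ 1 := h1 a (Finset.mem_cons_self a s)
    have hsum0 : 0 ≤ ∑ m ∈ s, ε m :=
      Finset.sum_nonneg (fun m hm => h0 m (Finset.mem_cons_of_mem hm))
    have hm := mul_le_mul_of_nonneg_left iha (by linarith : (0:ℝ) ≤ 1 - ε a)
    nlinarith

lemma sum_Ico_half_le (a K : ℕ) : ∑ m ∈ Ico a K, (1/2:ℝ)^m ≤ 2 * (1/2)^a := by
  rw [Finset.sum_Ico_eq_sum_range]
  have h1 : ∀ i ∈ range (K - a), (1/2:ℝ)^(a+i) = (1/2)^a * (1/2)^i := by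
    intro i _; rw [pow_add]
  rw [Finset.sum_congr rfl h1, ← Finset.mul_sum]
  have h2 : ∑ i ∈ range (K-a), (1/2:ℝ)^i ≤ 2 := by
    have h3 := Summable.sum_le_tsum (range (K-a)) (fun i _ => by positivity)
      (summable_geometric_of_lt_one (by norm_num : (0:ℝ) ≤ 1/2) (by norm_num))
    rw [tsum_geometric_of_lt_one (by norm_num) (by norm_num)] at h3
    norm_num at h3
    exact h3
  have h4 : (0:ℝ) ≤ (1/2:ℝ)^a := by positivity
  nlinarith

/-! ### partial products -/

lemma Q_partial (K : ℕ) (ζ : ℂ) : Q CB K ζ = 1 + ∑ k ∈ range K, Aterm CB k ζ := by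
  induction K with
  | zero => simp [Q]
  | succ K ih =>
    have h1 : Q CB (K+1) ζ = Q CB K ζ * fac CB ζ K := by
      rw [Q, Q, prod_range_succ]
    have h2 : Aterm CB K ζ = Q CB K ζ * (6 * ζ ^ (NN CB K)) := rfl
    rw [h1, sum_range_succ, ih, h2, ih, fac]
    ring

include hCB in
lemma aux_small (m : ℕ) :
    6 * (1/3:ℝ) ^ (Kf CB m) ≤ (1/2) ^ m ∧ 2 * nu CB m * (1/3:ℝ) ^ (Kf CB m) ≤ (1/2) ^ m := by
  have hkey := key3pow hCB m
  have h3 : (0:ℝ) < 3 ^ (Kf CB m) := by positivity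
  have h2 : (0:ℝ) < 2 ^ m := by positivity
  have e1 : (1/3:ℝ) ^ (Kf CB m) = 1 / 3 ^ (Kf CB m) := by rw [div_pow]; norm_num
  have e2 : (1/2:ℝ) ^ m = 1 / 2 ^ m := by rw [div_pow]; norm_num
  have hnu := nu_pos hCB m
  constructor
  · rw [e1, e2, mul_one_div, div_le_div_iff₀ h3 h2]
    nlinarith
  · rw [e1, e2, mul_one_div, div_le_div_iff₀ h3 h2]
    nlinarith

include hCB in
lemma dormant_pow {n m : ℕ} (hm : n + 2 ≤ m) {ζ : ℂ} (hζ : ‖ζ‖ < 1)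
    (hhigh : ‖ζ‖ ^ (NN CB (n+1)) ≤ 1/3) :
    ‖ζ‖ ^ (NN CB m) ≤ (1/3:ℝ) ^ (Kf CB m) := by
  have hr0 : (0:ℝ) ≤ ‖ζ‖ := norm_nonneg _
  obtain ⟨m', rfl⟩ : ∃ m', m = m' + 1 := ⟨m - 1, by omega⟩
  have h1 : NN CB (n+1) * Kf CB (m'+1) ≤ NN CB (m'+1) := by
    rw [NN_succ]
    have hmono : NN CB (n+1) ≤ NN CB m' := by
      apply NN_mono
      omega
    exact Nat.mul_le_mul_right _ hmono
  calc ‖ζ‖ ^ (NN CB (m'+1)) ≤ ‖ζ‖ ^ (NN CB (n+1) * Kf CB (m'+1)) :=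
        pow_le_pow_of_le_one hr0 hζ.le h1
  _ = (‖ζ‖ ^ (NN CB (n+1))) ^ (Kf CB (m'+1)) := by rw [← pow_mul]
  _ ≤ (1/3:ℝ) ^ (Kf CB (m'+1)) := pow_le_pow_left₀ (by positivity) hhigh _

lemma norm_fac_ge (ζ : ℂ) (m : ℕ) : 6 * ‖ζ‖ ^ (NN CB m) - 1 ≤ ‖fac CB ζ m‖ := by
  have h2 := norm_sub_le (fac CB ζ m) 1
  have h3 : fac CB ζ m - 1 = 6 * ζ ^ (NN CB m) := by rw [fac]; ring
  rw [h3] at h2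
  have h4 : ‖(6:ℂ) * ζ ^ (NN CB m)‖ = 6 * ‖ζ‖ ^ (NN CB m) := by
    rw [norm_mul, norm_pow]; norm_num
  rw [h4, norm_one] at h2
  linarith

lemma norm_fac_ge' (ζ : ℂ) (m : ℕ) : 1 - 6 * ‖ζ‖ ^ (NN CB m) ≤ ‖fac CB ζ m‖ := by
  have h2 := norm_sub_le (fac CB ζ m) (6 * ζ ^ (NN CB m))
  have h3 : fac CB ζ m - 6 * ζ ^ (NN CB m) = 1 := by rw [fac]; ring
  have h4 : ‖(6:ℂ) * ζ ^ (NN CB m)‖ = 6 * ‖ζ‖ ^ (NN CB m) := by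
    rw [norm_mul, norm_pow]; norm_num
  rw [h3, norm_one, h4] at h2
  linarith

include hCB in
lemma core (b1 : ℂ) (hb1 : ‖b1‖ + 2 ≤ CB) (n : ℕ) {ζ : ℂ} (hζ : ‖ζ‖ < 1)
    (hlow : ∀ m, m ≤ n → (1/3:ℝ) ≤ ‖ζ‖ ^ (NN CB m))
    (hhigh : ‖ζ‖ ^ (NN CB (n+1)) ≤ 1/3) :
    ((2:ℝ)^n/20 ≤ ‖Pser CB ζ‖) ∨ ((n:ℝ) ≤ (b1 * ζ + Tser CB ζ).re) := by
  have hr0 : (0:ℝ) ≤ ‖ζ‖ := norm_nonneg _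
  by_cases hc : (1/10:ℝ) ≤ ‖fac CB ζ (n+1)‖
  · -- A-case
    left
    -- mature factors
    have hmature : ∀ m, m < n → (2:ℝ) ≤ ‖fac CB ζ m‖ := by
      intro m hm
      have h45 : (4/5:ℝ) ≤ ‖ζ‖ ^ (NN CB m) := by
        by_contra hlt
        push_neg at hlt
        have h5 : 5 * NN CB m ≤ NN CB n := NN_ge_five_mul hm
        have h6 : ‖ζ‖ ^ (NN CB n) ≤ ‖ζ‖ ^ (5 * NN CB m) :=
          pow_le_pow_of_le_one hr0 hζ.le h5
        have h7 : ‖ζ‖ ^ (5 * NN CB m) = (‖ζ‖ ^ (NN CB m)) ^ 5 := by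
          rw [← pow_mul, mul_comm]
        have h8 : (‖ζ‖ ^ (NN CB m)) ^ 5 ≤ (4/5:ℝ) ^ 5 :=
          pow_le_pow_left₀ (by positivity) hlt.le 5
        have h9 := hlow n (le_refl n)
        have h10 : ((4:ℝ)/5) ^ 5 < 1/3 := by norm_num
        rw [h7] at h6
        linarith
      have := norm_fac_ge (CB := CB) ζ m
      linarith
    have hfn : (1:ℝ) ≤ ‖fac CB ζ n‖ := by
      have := norm_fac_ge (CB := CB) ζ n
      have h9 := hlow n (le_refl n)
      linarith
    have hdorm2 : ∀ m, n + 2 ≤ m → 1 - (1/2:ℝ)^m ≤ ‖fac CB ζ m‖ := by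
      intro m hm
      have h1 := dormant_pow hCB hm hζ hhigh
      have h2 := (aux_small hCB m).1
      have h3 := norm_fac_ge' (CB := CB) ζ m
      have h4 : 6 * ‖ζ‖ ^ (NN CB m) ≤ (1/2:ℝ)^m := by nlinarith
      linarith
    -- partial product bound
    have hQlow : ∀ K, n + 2 ≤ K → (2:ℝ)^n/20 ≤ ‖Q CB K ζ‖ := by
      intro K hK
      have hsplit : ‖Q CB K ζ‖ =
          (∏ m ∈ range n, ‖fac CB ζ m‖) * ‖fac CB ζ n‖ * ‖fac CB ζ (n+1)‖ *
            (∏ m ∈ Ico (n+2) K, ‖fac CB ζ m‖) := by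
        rw [Q, norm_prod, range_eq_Ico, ← Finset.prod_Ico_consecutive _ (Nat.zero_le (n+2)) hK,
          ← range_eq_Ico, prod_range_succ, prod_range_succ]
      have h1 : (2:ℝ)^n ≤ ∏ m ∈ range n, ‖fac CB ζ m‖ := by
        calc (2:ℝ)^n = ∏ _m ∈ range n, (2:ℝ) := by rw [prod_const, card_range]
        _ ≤ ∏ m ∈ range n, ‖fac CB ζ m‖ :=
              Finset.prod_le_prod (fun i _ => by norm_num)
                (fun i hi => hmature i (mem_range.mp hi))
      have h4 : (1/2:ℝ) ≤ ∏ m ∈ Ico (n+2) K, ‖fac CB ζ m‖ := by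
        have h5 : 1 - ∑ m ∈ Ico (n+2) K, (1/2:ℝ)^m ≤ ∏ m ∈ Ico (n+2) K, (1 - (1/2:ℝ)^m) :=
          prod_ge_one_sub_sum _ _ (fun m _ => by positivity)
            (fun m _ => by
              have : (1/2:ℝ)^m ≤ 1 := pow_le_one₀ (by norm_num) (by norm_num)
              linarith)
        have h6 : ∏ m ∈ Ico (n+2) K, (1 - (1/2:ℝ)^m) ≤ ∏ m ∈ Ico (n+2) K, ‖fac CB ζ m‖ :=
          Finset.prod_le_prod
            (fun m hm => by
              have h7 : (1/2:ℝ)^m ≤ (1/2:ℝ)^(n+2) :=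
                pow_le_pow_of_le_one (by norm_num) (by norm_num) (mem_Ico.mp hm).1
              have h8 : (1/2:ℝ)^(n+2) ≤ (1/2:ℝ)^1 :=
                pow_le_pow_of_le_one (by norm_num) (by norm_num) (by omega)
              rw [pow_one] at h8
              linarith)
            (fun m hm => hdorm2 m (mem_Ico.mp hm).1)
        have h9 := sum_Ico_half_le (n+2) K
        have h10 : 2 * (1/2:ℝ)^(n+2) ≤ 1/2 := by
          have h11 : (1/2:ℝ)^(n+2) ≤ (1/2:ℝ)^2 :=
            pow_le_pow_of_le_one (by norm_num) (by norm_num) (by omega)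
          have h12 : ((1:ℝ)/2)^2 = 1/4 := by norm_num
          rw [h12] at h11
          linarith
        linarith
      rw [hsplit]
      have h2n : (0:ℝ) ≤ (2:ℝ)^n := by positivity
      have e1 : (0:ℝ) ≤ ∏ m ∈ range n, ‖fac CB ζ m‖ :=
        Finset.prod_nonneg (fun i _ => norm_nonneg _)
      have e2 : (0:ℝ) ≤ (∏ m ∈ range n, ‖fac CB ζ m‖) * ‖fac CB ζ n‖ :=
        mul_nonneg e1 (norm_nonneg _)
      have e3 : (0:ℝ) ≤ (∏ m ∈ range n, ‖fac CB ζ m‖) * ‖fac CB ζ n‖ * ‖fac CB ζ (n+1)‖ :=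
        mul_nonneg e2 (norm_nonneg _)
      have step1 : (2:ℝ)^n * 1 ≤ (∏ m ∈ range n, ‖fac CB ζ m‖) * ‖fac CB ζ n‖ :=
        mul_le_mul h1 hfn zero_le_one (le_trans h2n h1)
      have step2 : (2:ℝ)^n * 1 * (1/10) ≤
          (∏ m ∈ range n, ‖fac CB ζ m‖) * ‖fac CB ζ n‖ * ‖fac CB ζ (n+1)‖ :=
        mul_le_mul step1 hc (by norm_num) e2
      have step3 : (2:ℝ)^n * 1 * (1/10) * (1/2) ≤
          (∏ m ∈ range n, ‖fac CB ζ m‖) * ‖fac CB ζ n‖ * ‖fac CB ζ (n+1)‖ *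
            (∏ m ∈ Ico (n+2) K, ‖fac CB ζ m‖) :=
        mul_le_mul step2 h4 (by norm_num) e3
      calc (2:ℝ)^n/20 = (2:ℝ)^n * 1 * (1/10) * (1/2) := by ring
      _ ≤ _ := step3
    -- pass to the limit
    have htend : Tendsto (fun K => ‖Q CB K ζ‖) atTop (nhds ‖Pser CB ζ‖) := by
      have hs := (summable_Aterm (CB := CB) hζ).hasSum
      have h1 := hs.tendsto_sum_nat
      have h2 : Tendsto (fun K => 1 + ∑ k ∈ range K, Aterm CB k ζ) atTop
          (nhds (Pser CB ζ)) := by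
        rw [Pser]
        exact tendsto_const_nhds.add h1
      have h3 : (fun K => Q CB K ζ) = fun K => 1 + ∑ k ∈ range K, Aterm CB k ζ := by
        funext K; exact Q_partial K ζ
      rw [← h3] at h2
      exact h2.norm
    exact ge_of_tendsto htend (Filter.eventually_atTop.mpr ⟨n+2, hQlow⟩)
  · -- B-case
    right
    push_neg at hc
    have hpsibig : (1/6:ℝ) ≤ (psi CB (n+1) ζ).re := by
      have : fac CB ζ (n+1) = 1 + 6 * ζ ^ (NN CB (n+1)) := rfl
      rw [this] at hc
      exact psi_re_big hc.le
    -- summability of the re-series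
    have hsumnorm := summable_Bterm_norm hCB hζ
    have hsumre : Summable (fun k => (Bterm CB k ζ).re) := by
      apply Summable.of_norm_bounded hsumnorm
      intro k
      exact Complex.abs_re_le_norm _
    have hre_eq : (Tser CB ζ).re = ∑' k, (Bterm CB k ζ).re := by
      rw [Tser]
      exact (Complex.reCLM.map_tsum (summable_Bterm hCB hζ))
    have hBre : ∀ k, (Bterm CB k ζ).re = nu CB k * (psi CB k ζ).re := by
      intro k
      rw [Bterm]
      simp [Complex.mul_re]
    -- lower bound for each early term
    have hterm_low : ∀ k, -(nu CB k)/2 ≤ (Bterm CB k ζ).re := by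
      intro k
      rw [hBre]
      have h1 : ‖ζ ^ (NN CB k)‖ < 1 := by
        rw [norm_pow]
        exact pow_lt_one₀ hr0 hζ (NN_pos (CB := CB) k).ne'
      have h2 := psi_re_lower h1
      have h3 : psi CB k ζ = -(ζ ^ (NN CB k))/(1 + ζ ^ (NN CB k)) := rfl
      rw [h3]
      have h4 := (nu_pos hCB k).le
      nlinarith
    -- tail bound
    have htail_small : ∀ k, |(Bterm CB (k + (n+2)) ζ).re| ≤ (1/2:ℝ)^(k + (n+2)) := by
      intro k
      set m := k + (n+2) with hm
      have hm2 : n + 2 ≤ m := by omega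
      have h1 := dormant_pow hCB hm2 hζ hhigh
      have h13 : (1/3:ℝ)^(Kf CB m) ≤ 1/3 := by
        calc (1/3:ℝ)^(Kf CB m) ≤ (1/3:ℝ)^1 :=
              pow_le_pow_of_le_one (by norm_num) (by norm_num)
                (le_trans (by norm_num) (Kf_ge (CB := CB) m))
        _ = 1/3 := pow_one _
      have hden : (2/3:ℝ) ≤ ‖1 + ζ ^ (NN CB m)‖ := by
        have := norm_one_add_pow_ge hζ (NN CB m)
        linarith
      have hpsi_le : ‖psi CB m ζ‖ ≤ (3/2) * ‖ζ‖^(NN CB m) := by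
        rw [psi, norm_div, norm_neg, norm_pow]
        rw [div_le_iff₀ (by linarith)]
        nlinarith [pow_nonneg hr0 (NN CB m)]
      have h2 := (aux_small hCB m).2
      have h3 : |(Bterm CB m ζ).re| ≤ ‖Bterm CB m ζ‖ := Complex.abs_re_le_norm _
      have h4 : ‖Bterm CB m ζ‖ ≤ nu CB m * ‖psi CB m ζ‖ := by
        rw [Bterm, norm_mul]
        have h5 : ‖((nu CB m : ℝ) : ℂ)‖ = nu CB m := by
          rw [Complex.norm_real, Real.norm_eq_abs, abs_of_pos (nu_pos hCB m)]
        rw [h5]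
      have h6 := (nu_pos hCB m).le
      have h7 : nu CB m * ‖ζ‖^(NN CB m) ≤ nu CB m * (1/3:ℝ)^(Kf CB m) := by
        apply mul_le_mul_of_nonneg_left h1 h6
      nlinarith [norm_nonneg (psi CB m ζ), pow_nonneg hr0 (NN CB m),
        pow_nonneg (by norm_num : (0:ℝ) ≤ 1/3) (Kf CB m)]
    have hsumtail : Summable (fun k => (Bterm CB (k + (n+2)) ζ).re) :=
      (summable_nat_add_iff (n+2)).mpr hsumre
    have hsumgeom : Summable (fun k : ℕ => (1/2:ℝ)^(k + (n+2))) := by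
      apply Summable.of_nonneg_of_le (fun k => by positivity)
        (fun k => le_of_eq (by rw [pow_add]))
      exact (summable_geometric_of_lt_one (by norm_num) (by norm_num)).mul_right _
    have htail_ge : (-1:ℝ) ≤ ∑' k, (Bterm CB (k + (n+2)) ζ).re := by
      have h1 : |∑' k, (Bterm CB (k + (n+2)) ζ).re| ≤ ∑' k, (1/2:ℝ)^(k + (n+2)) := by
        calc |∑' k, (Bterm CB (k + (n+2)) ζ).re| ≤ ∑' k, |(Bterm CB (k + (n+2)) ζ).re| := by
              have := norm_tsum_le_tsum_norm (f := fun k => (Bterm CB (k + (n+2)) ζ).re) ?_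
              · simpa [Real.norm_eq_abs] using this
              · apply Summable.of_nonneg_of_le (fun k => abs_nonneg _) htail_small hsumgeom
        _ ≤ ∑' k, (1/2:ℝ)^(k + (n+2)) := by
              apply Summable.tsum_le_tsum htail_small _ hsumgeom
              apply Summable.of_nonneg_of_le (fun k => abs_nonneg _) htail_small hsumgeom
      have h2 : ∑' k, (1/2:ℝ)^(k + (n+2)) ≤ 1 := by
        have h3 : ∀ k : ℕ, (1/2:ℝ)^(k + (n+2)) = (1/2)^k * (1/2)^(n+2) := by
          intro k; rw [pow_add]
        rw [tsum_congr h3, tsum_mul_right, tsum_geometric_of_lt_one (by norm_num) (by norm_num)]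
        have h4 : (1/2:ℝ)^(n+2) ≤ (1/2:ℝ)^1 :=
          pow_le_pow_of_le_one (by norm_num) (by norm_num) (by omega)
        rw [pow_one] at h4
        have h5 : ((1:ℝ) - 1/2)⁻¹ = 2 := by norm_num
        rw [h5]
        linarith
      have h5 := abs_le.mp h1
      linarith
    -- early terms
    have hearly : -(CB * (7:ℝ)^(n+1)) + CB ≤ ∑ k ∈ range (n+1), (Bterm CB k ζ).re := by
      have h1 : ∑ k ∈ range (n+1), -(nu CB k)/2 ≤ ∑ k ∈ range (n+1), (Bterm CB k ζ).re :=
        Finset.sum_le_sum (fun k _ => hterm_low k)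
      have h2 : ∀ k ∈ range (n+1), -(nu CB k)/2 = (-(6*CB)) * (7:ℝ)^k := by
        intro k _
        rw [nu]
        ring
      rw [Finset.sum_congr rfl h2, ← Finset.mul_sum, geom_sum_eq (by norm_num : (7:ℝ) ≠ 1)] at h1
      have h3 : (-(6*CB)) * (((7:ℝ)^(n+1) - 1)/(7-1)) = -(CB * (7:ℝ)^(n+1)) + CB := by ring
      rw [h3] at h1
      exact h1
    -- the big term
    have hbig : 2 * CB * (7:ℝ)^(n+1) ≤ (Bterm CB (n+1) ζ).re := by
      rw [hBre]
      have h1 : nu CB (n+1) = 12 * CB * (7:ℝ)^(n+1) := rfl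
      have h2 := (nu_pos hCB (n+1)).le
      nlinarith [hpsibig]
    -- b1 term
    have hb1term : -‖b1‖ ≤ (b1 * ζ).re := by
      have h1 : |(b1 * ζ).re| ≤ ‖b1 * ζ‖ := Complex.abs_re_le_norm _
      have h2 : ‖b1 * ζ‖ ≤ ‖b1‖ := by
        rw [norm_mul]
        nlinarith [norm_nonneg b1]
      have := abs_le.mp h1
      linarith
    -- assemble
    have hsplitsum : ∑' k, (Bterm CB k ζ).re =
        ∑ k ∈ range (n+2), (Bterm CB k ζ).re + ∑' k, (Bterm CB (k + (n+2)) ζ).re :=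
      (Summable.sum_add_tsum_nat_add (n+2) hsumre).symm
    have hsum2 : ∑ k ∈ range (n+2), (Bterm CB k ζ).re =
        ∑ k ∈ range (n+1), (Bterm CB k ζ).re + (Bterm CB (n+1) ζ).re := by
      rw [sum_range_succ]
    have hpow : (n:ℝ) ≤ (7:ℝ)^(n+1) := by
      have h1 : n < 7^n := Nat.lt_pow_self (by norm_num : 1 < 7)
      have h2 : (7:ℕ)^n ≤ 7^(n+1) := Nat.pow_le_pow_right (by norm_num) (by omega)
      have h3 : n ≤ 7^(n+1) := by omega
      exact_mod_cast h3
    rw [Complex.add_re, hre_eq, hsplitsum, hsum2]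
    have hCB7 : (7:ℝ)^(n+1) * CB ≥ (7:ℝ)^(n+1) * 2 := by
      apply mul_le_mul_of_nonneg_left hCB (by positivity)
    nlinarith [pow_pos (by norm_num : (0:ℝ) < 7) (n+1)]

/-! ### derivative helper -/

lemma eq_of_sq_bound {F : ℂ → ℂ} {a d : ℂ} {D : ℝ}
    (h : ∀ ζ : ℂ, ‖ζ‖ ≤ 1/2 → ‖F ζ - (a + ζ * d)‖ ≤ D * ‖ζ‖^2) : F 0 = a := by
  have h0 := h 0 (by norm_num)
  simp at h0
  have : F 0 - a = 0 := by
    exact h0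
  linear_combination this

lemma hasDerivAt_of_sq_bound {F : ℂ → ℂ} {a d : ℂ} {D : ℝ} (hD : 0 ≤ D)
    (h : ∀ ζ : ℂ, ‖ζ‖ ≤ 1/2 → ‖F ζ - (a + ζ * d)‖ ≤ D * ‖ζ‖^2) : HasDerivAt F d 0 := by
  have hF0 : F 0 = a := eq_of_sq_bound h
  rw [hasDerivAt_iff_isLittleO]
  have hgoal : (fun ζ : ℂ => F ζ - F 0 - (ζ - 0) • d) = fun ζ => F ζ - (a + ζ * d) := by
    funext ζ
    rw [hF0, sub_zero, smul_eq_mul]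
    ring
  rw [hgoal]
  rw [Asymptotics.isLittleO_iff]
  intro c hc
  rw [Metric.eventually_nhds_iff]
  refine ⟨min (1/2) (c/(D+1)), by positivity, ?_⟩
  intro ζ hζ
  rw [dist_zero_right] at hζ
  have h1 : ‖ζ‖ ≤ 1/2 := le_of_lt (lt_of_lt_of_le hζ (min_le_left _ _))
  have h2 : ‖ζ‖ < c/(D+1) := lt_of_lt_of_le hζ (min_le_right _ _)
  have h3 := h ζ h1
  have h4 : ‖ζ - 0‖ = ‖ζ‖ := by rw [sub_zero]
  rw [h4]
  have h5 : (0:ℝ) ≤ ‖ζ‖ := norm_nonneg _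
  have h6 : D * ‖ζ‖^2 ≤ c * ‖ζ‖ := by
    have h7 : ‖ζ‖ * (D+1) < c := by
      rw [← lt_div_iff₀ (by linarith : (0:ℝ) < D+1)]
      exact h2
    nlinarith
  linarith

lemma coord_norm_le (x : EuclideanSpace ℂ (Fin 2)) (i : Fin 2) : ‖x i‖ ≤ ‖x‖ := by
  rw [EuclideanSpace.norm_eq]
  have h1 : ‖x i‖^2 ≤ ∑ j : Fin 2, ‖x j‖^2 :=
    Finset.single_le_sum (f := fun j => ‖x j‖^2) (fun j _ => sq_nonneg _) (Finset.mem_univ i)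
  calc ‖x i‖ = Real.sqrt (‖x i‖^2) := by rw [Real.sqrt_sq (norm_nonneg _)]
  _ ≤ Real.sqrt (∑ j : Fin 2, ‖x j‖^2) := Real.sqrt_le_sqrt h1

end PDisc

open PDisc Metric Filter

/-- A map, viewed as a map from the open unit disc `𝔻 ⊆ ℂ` to `ℂ²`, is proper if the
preimage of every compact set is a compact subset of `𝔻`. -/
def ProperOnDisc (f : ℂ → EuclideanSpace ℂ (Fin 2)) : Prop :=
  ∀ K : Set (EuclideanSpace ℂ (Fin 2)), IsCompact K →
    IsCompact {ζ : ℂ | ζ ∈ Metric.ball (0 : ℂ) 1 ∧ f ζ ∈ K}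

/-- a proper holomorphic disc in `ℂ²` through a prescribed point, with
prescribed tangent direction, avoiding the graph of an entire function `φ : ℂ → ℂ`. -/
theorem proper_disc_avoids_graph_of_entire
    (φ : ℂ → ℂ) (hφ : Differentiable ℂ φ)
    (Γ : Set (EuclideanSpace ℂ (Fin 2)))
    (hΓ : Γ = {z | z 1 = φ (z 0)})
    (p : EuclideanSpace ℂ (Fin 2)) (hp : p 1 ≠ φ (p 0))
    (v : EuclideanSpace ℂ (Fin 2)) :
    ∃ (lam : ℝ) (f : ℂ → EuclideanSpace ℂ (Fin 2)),
      0 < lam ∧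
      DifferentiableOn ℂ f (Metric.ball (0 : ℂ) 1) ∧
      ProperOnDisc f ∧
      f 0 = p ∧
      deriv f 0 = lam • v ∧
      ∀ ζ ∈ Metric.ball (0 : ℂ) 1, f ζ ∉ Γ := by
  classical
  set q2 : ℂ := p 1 - φ (p 0) with hq2def
  have hq2 : q2 ≠ 0 := sub_ne_zero.mpr hp
  set b1 : ℂ := (v 1 - deriv φ (p 0) * v 0) / q2 with hb1def
  set CB : ℝ := ‖b1‖ + 2 with hCBdef
  have hCB : 2 ≤ CB := by
    rw [hCBdef]
    linarith [norm_nonneg b1]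
  have hb1CB : ‖b1‖ + 2 ≤ CB := hCBdef.ge
  set μr : ℝ := 4*(‖p 0‖ + ‖v 0‖) + 5 with hμdef
  have hμpos : 0 < μr := by
    rw [hμdef]
    linarith [norm_nonneg (p 0), norm_nonneg (v 0)]
  set pr : ℂ → ℂ := fun ζ => p 0 + v 0 * ζ + (μr:ℂ) * ζ^2 with hprdef
  set Af : ℂ → ℂ := fun ζ => pr ζ * PDisc.Pser CB ζ with hAdef
  set Bf : ℂ → ℂ := fun ζ => b1 * ζ + PDisc.Tser CB ζ with hBdef
  set e := EuclideanSpace.equiv (Fin 2) ℂ with hedef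
  set g : ℂ → (Fin 2 → ℂ) := fun ζ => ![Af ζ, φ (Af ζ) + q2 * Complex.exp (Bf ζ)] with hgdef
  set f : ℂ → EuclideanSpace ℂ (Fin 2) := fun ζ => e.symm (g ζ) with hfdef
  -- basic rfl facts
  have hf0c : ∀ ζ, (f ζ) 0 = Af ζ := fun ζ => rfl
  have hf1c : ∀ ζ, (f ζ) 1 = φ (Af ζ) + q2 * Complex.exp (Bf ζ) := fun ζ => rfl
  -- differentiability
  have hprdiff : Differentiable ℂ pr := by
    rw [hprdef]
    apply Differentiable.add
    · apply Differentiable.add (differentiable_const _)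
      exact (differentiable_fun_id).const_mul _
    · exact (differentiable_pow 2).const_mul _
  have hAdiff : DifferentiableOn ℂ Af (ball 0 1) := by
    rw [hAdef]
    exact (hprdiff.differentiableOn).mul (PDisc.Pser_diffOn)
  have hBdiff : DifferentiableOn ℂ Bf (ball 0 1) := by
    rw [hBdef]
    exact ((differentiable_fun_id.const_mul b1).differentiableOn).add (PDisc.Tser_diffOn hCB)
  have hgdiff : DifferentiableOn ℂ g (ball 0 1) := by
    rw [differentiableOn_pi]
    intro i
    fin_cases i
    · show DifferentiableOn ℂ (fun x => g x 0) (ball 0 1)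
      have h0 : (fun x => g x 0) = Af := by funext x; simp [hgdef]
      rw [h0]; exact hAdiff
    · show DifferentiableOn ℂ (fun x => g x 1) (ball 0 1)
      have h1 : (fun x => g x 1) = fun x => φ (Af x) + q2 * Complex.exp (Bf x) := by
        funext x; simp [hgdef]
      rw [h1]
      exact (hφ.comp_differentiableOn hAdiff).add ((hBdiff.cexp).const_mul q2)
  have hfdiff : DifferentiableOn ℂ f (ball 0 1) := by
    rw [hfdef]
    exact (e.symm.differentiable).comp_differentiableOn hgdiff
  -- jet bounds
  obtain ⟨CP, hCP0, hCPb⟩ := PDisc.Pser_sub_one_bound (CB := CB)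
  obtain ⟨CT, hCT0, hCTb⟩ := PDisc.Tser_bound hCB
  have hAsq : ∀ ζ : ℂ, ‖ζ‖ ≤ 1/2 →
      ‖Af ζ - (p 0 + ζ * (v 0))‖ ≤ (μr + (‖p 0‖ + ‖v 0‖ + μr) * CP) * ‖ζ‖^2 := by
    intro ζ hζ
    have key : Af ζ - (p 0 + ζ * (v 0)) =
        (μr:ℂ)*ζ^2 + pr ζ * (PDisc.Pser CB ζ - 1) := by
      rw [hAdef, hprdef]
      ring
    rw [key]
    have h1 : ‖(μr:ℂ)*ζ^2‖ = μr * ‖ζ‖^2 := by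
      rw [norm_mul, norm_pow, Complex.norm_real, Real.norm_eq_abs, abs_of_pos hμpos]
    have h2 : ‖pr ζ‖ ≤ ‖p 0‖ + ‖v 0‖ + μr := by
      rw [hprdef]
      have h3 : ‖v 0 * ζ‖ ≤ ‖v 0‖ := by
        rw [norm_mul]
        nlinarith [norm_nonneg (v 0)]
      have h4 : ‖(μr:ℂ)*ζ^2‖ ≤ μr := by
        rw [h1]
        have hsq : ‖ζ‖^2 ≤ 1/4 := by nlinarith [norm_nonneg ζ]
        nlinarith [hμpos.le]
      calc ‖p 0 + v 0 * ζ + (μr:ℂ)*ζ^2‖ ≤ ‖p 0 + v 0 * ζ‖ + ‖(μr:ℂ)*ζ^2‖ := norm_add_le _ _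
      _ ≤ (‖p 0‖ + ‖v 0 * ζ‖) + ‖(μr:ℂ)*ζ^2‖ := by linarith [norm_add_le (p 0) (v 0 * ζ)]
      _ ≤ ‖p 0‖ + ‖v 0‖ + μr := by linarith
    have h5 := hCPb ζ hζ
    calc ‖(μr:ℂ)*ζ^2 + pr ζ * (PDisc.Pser CB ζ - 1)‖
        ≤ ‖(μr:ℂ)*ζ^2‖ + ‖pr ζ‖ * ‖PDisc.Pser CB ζ - 1‖ := by
          rw [← norm_mul]
          exact norm_add_le _ _
    _ ≤ μr * ‖ζ‖^2 + (‖p 0‖ + ‖v 0‖ + μr) * (CP * ‖ζ‖^2) := by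
          rw [h1]
          have h6 : ‖pr ζ‖ * ‖PDisc.Pser CB ζ - 1‖ ≤ (‖p 0‖ + ‖v 0‖ + μr) * (CP * ‖ζ‖^2) := by
            apply mul_le_mul h2 h5 (norm_nonneg _) (by positivity)
          linarith
    _ = (μr + (‖p 0‖ + ‖v 0‖ + μr) * CP) * ‖ζ‖^2 := by ring
  have hBsq : ∀ ζ : ℂ, ‖ζ‖ ≤ 1/2 → ‖Bf ζ - (0 + ζ * b1)‖ ≤ CT * ‖ζ‖^2 := by
    intro ζ hζ
    have key : Bf ζ - (0 + ζ * b1) = PDisc.Tser CB ζ := by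
      rw [hBdef]
      ring
    rw [key]
    exact hCTb ζ hζ
  have hAder : HasDerivAt Af (v 0) 0 :=
    hasDerivAt_of_sq_bound (by positivity) hAsq
  have hAf0 : Af 0 = p 0 := eq_of_sq_bound hAsq
  have hBder : HasDerivAt Bf b1 0 := hasDerivAt_of_sq_bound hCT0 hBsq
  have hBf0 : Bf 0 = 0 := eq_of_sq_bound hBsq
  -- use lam = 1
  refine ⟨1, f, one_pos, hfdiff, ?_, ?_, ?_, ?_⟩
  · -- ProperOnDisc
    intro K hK
    obtain ⟨R0, hR0⟩ := hK.isBounded.subset_closedBall 0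
    set M1 : ℝ := max R0 0 with hM1def
    have hM1 : ∀ x ∈ K, ‖x‖ ≤ M1 := by
      intro x hx
      have h := hR0 hx
      rw [Metric.mem_closedBall, dist_zero_right] at h
      exact h.trans (le_max_left _ _)
    have hM10 : (0:ℝ) ≤ M1 := le_max_right _ _
    obtain ⟨M2, hM2⟩ := (isCompact_closedBall (0:ℂ) M1).exists_bound_of_continuousOn
      (hφ.continuous.continuousOn)
    have hq2pos : 0 < ‖q2‖ := norm_pos_iff.mpr hq2
    obtain ⟨n₀, hn₀⟩ := exists_nat_gt (max (20*M1) ((M1 + |M2|)/‖q2‖))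
    have hn₀a : 20*M1 < (n₀:ℝ) := lt_of_le_of_lt (le_max_left _ _) hn₀
    have hn₀b : (M1 + |M2|)/‖q2‖ < (n₀:ℝ) := lt_of_le_of_lt (le_max_right _ _) hn₀
    have hmain : ∀ ζ : ℂ, ‖ζ‖ < 1 → f ζ ∈ K → ‖ζ‖ ^ (NN CB (n₀+1)) ≤ 1/3 := by
      intro ζ hζ hζK
      by_contra hgt
      push_neg at hgt
      have hζpos : 0 < ‖ζ‖ := by
        rcases eq_or_lt_of_le (norm_nonneg ζ) with h | h
        · exfalso
          have h2 : ‖ζ‖ ^ (NN CB (n₀+1)) = 0 := by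
            rw [← h]
            exact zero_pow (NN_pos (CB := CB) _).ne'
          rw [h2] at hgt
          norm_num at hgt
        · exact h
      have hex : ∃ j, ‖ζ‖ ^ (NN CB (j+1)) ≤ 1/3 := by
        obtain ⟨j, hj⟩ := exists_pow_lt_of_lt_one (show (0:ℝ) < 1/3 by norm_num) hζ
        refine ⟨j, ?_⟩
        have hjN : j ≤ NN CB (j+1) := by
          have := NN_ge_id (CB := CB) (j+1)
          omega
        calc ‖ζ‖ ^ (NN CB (j+1)) ≤ ‖ζ‖ ^ j :=
              pow_le_pow_of_le_one (norm_nonneg _) hζ.le hjN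
        _ ≤ 1/3 := hj.le
      set n := Nat.find hex with hndef
      have hn1 : ‖ζ‖ ^ (NN CB (n+1)) ≤ 1/3 := Nat.find_spec hex
      have hlow : ∀ m, m ≤ n → (1/3:ℝ) ≤ ‖ζ‖ ^ (NN CB m) := by
        intro m hm
        match m with
        | 0 =>
          have h2 : NN CB 0 ≤ NN CB (n₀+1) := NN_mono (Nat.zero_le _)
          have h3 : ‖ζ‖ ^ (NN CB (n₀+1)) ≤ ‖ζ‖ ^ (NN CB 0) :=
            pow_le_pow_of_le_one (norm_nonneg _) hζ.le h2
          linarith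
        | (m'+1) =>
          have h4 : m' < n := by omega
          have h5 := Nat.find_min hex h4
          linarith [not_le.mp h5]
      have hn₀n : n₀ ≤ n := by
        by_contra hlt
        push_neg at hlt
        have h2 : NN CB (n+1) ≤ NN CB (n₀+1) := NN_mono (by omega)
        have h3 : ‖ζ‖ ^ (NN CB (n₀+1)) ≤ ‖ζ‖ ^ (NN CB (n+1)) :=
          pow_le_pow_of_le_one (norm_nonneg _) hζ.le h2
        linarith
      have hAfK : ‖Af ζ‖ ≤ M1 := by
        have h4 := PDisc.coord_norm_le (f ζ) 0
        rw [hf0c ζ] at h4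
        exact h4.trans (hM1 _ hζK)
      rcases PDisc.core hCB b1 hb1CB n hζ hlow hn1 with hA | hB
      · -- A-case
        have hπ : (1:ℝ) ≤ ‖pr ζ‖ := by
          have h02 := hlow 0 (Nat.zero_le n)
          have hNN0 : NN CB 0 = 2 := rfl
          rw [hNN0] at h02
          have h1 : ‖(μr:ℂ)*ζ^2‖ = μr * ‖ζ‖^2 := by
            rw [norm_mul, norm_pow, Complex.norm_real, Real.norm_eq_abs, abs_of_pos hμpos]
          have h2 : ‖p 0 + v 0 * ζ‖ ≤ ‖p 0‖ + ‖v 0‖ := by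
            have h3 : ‖v 0 * ζ‖ ≤ ‖v 0‖ := by
              rw [norm_mul]
              nlinarith [norm_nonneg (v 0)]
            calc ‖p 0 + v 0 * ζ‖ ≤ ‖p 0‖ + ‖v 0 * ζ‖ := norm_add_le _ _
            _ ≤ ‖p 0‖ + ‖v 0‖ := by linarith
          have h3 : ‖(μr:ℂ)*ζ^2‖ - ‖p 0 + v 0 * ζ‖ ≤ ‖pr ζ‖ := by
            have h4 := norm_sub_le (pr ζ) (p 0 + v 0 * ζ)
            have h5 : pr ζ - (p 0 + v 0 * ζ) = (μr:ℂ)*ζ^2 := by rw [hprdef]; ring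
            rw [h5] at h4
            linarith
          rw [h1] at h3
          have h7 : μr * (1/3) ≤ μr * ‖ζ‖^2 := mul_le_mul_of_nonneg_left h02 hμpos.le
          have h9 : (1:ℝ) + (‖p 0‖ + ‖v 0‖) ≤ μr * (1/3) := by
            rw [hμdef]
            have ha := norm_nonneg (p 0)
            have hb := norm_nonneg (v 0)
            nlinarith
          have h10 := le_trans h9 h7
          revert h3
          generalize ‖pr ζ‖ = X
          intro h3
          linarith
        have hnormA : ‖Af ζ‖ = ‖pr ζ‖ * ‖PDisc.Pser CB ζ‖ := by
          rw [hAdef]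
          exact norm_mul _ _
        have h1 : (2:ℝ)^n₀ ≤ (2:ℝ)^n := pow_le_pow_right₀ one_le_two hn₀n
        have h2 : (n₀:ℝ) ≤ (2:ℝ)^n₀ := by
          have h3 : n₀ < 2^n₀ := Nat.lt_two_pow_self
          have h4 : (n₀:ℝ) < ((2:ℕ):ℝ)^n₀ := by exact_mod_cast h3
          norm_num at h4
          linarith
        have h5 : (n₀:ℝ)/20 ≤ ‖Af ζ‖ := by
          rw [hnormA]
          have h6 : (0:ℝ) ≤ ‖PDisc.Pser CB ζ‖ := norm_nonneg _
          nlinarith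
        linarith
      · -- B-case
        have h6 : ‖φ (Af ζ)‖ ≤ M2 := by
          apply hM2
          rw [Metric.mem_closedBall, dist_zero_right]
          exact hAfK
        have h7 : ‖(f ζ) 1‖ ≤ M1 := (PDisc.coord_norm_le (f ζ) 1).trans (hM1 _ hζK)
        have h9 : q2 * Complex.exp (Bf ζ) = (f ζ) 1 - φ (Af ζ) := by
          rw [hf1c ζ]
          ring
        have h8 : ‖q2 * Complex.exp (Bf ζ)‖ ≤ M1 + |M2| := by
          rw [h9]
          calc ‖(f ζ) 1 - φ (Af ζ)‖ ≤ ‖(f ζ) 1‖ + ‖φ (Af ζ)‖ := norm_sub_le _ _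
          _ ≤ M1 + |M2| := by
                have := le_abs_self M2
                linarith
        have h11 : ‖q2 * Complex.exp (Bf ζ)‖ = ‖q2‖ * Real.exp ((Bf ζ).re) := by
          rw [norm_mul, Complex.norm_exp]
        have h12 : (n:ℝ) ≤ (Bf ζ).re := hB
        have h13 : Real.exp ((n₀:ℝ)) ≤ Real.exp ((Bf ζ).re) := by
          apply Real.exp_le_exp.mpr
          have : (n₀:ℝ) ≤ (n:ℝ) := by exact_mod_cast hn₀n
          linarith
        have h14 : (n₀:ℝ) + 1 ≤ Real.exp (n₀:ℝ) := Real.add_one_le_exp _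
        have h15 : M1 + |M2| < ‖q2‖ * n₀ := by
          rw [div_lt_iff₀ hq2pos] at hn₀b
          linarith [hn₀b]
        have h16 : ‖q2‖ * (n₀:ℝ) ≤ ‖q2‖ * Real.exp ((Bf ζ).re) := by
          apply mul_le_mul_of_nonneg_left _ hq2pos.le
          linarith
        rw [h11] at h8
        linarith
    -- conclude compactness
    set Nb := NN CB (n₀+1) with hNbdef
    have hNbpos : 0 < Nb := NN_pos _
    set c : ℝ := (1/3:ℝ) ^ ((Nb:ℝ))⁻¹ with hcdef
    have hNbR : (0:ℝ) < (Nb:ℝ) := by exact_mod_cast hNbpos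
    have hc1 : c < 1 := Real.rpow_lt_one (by norm_num) (by norm_num) (by positivity)
    have hc0 : (0:ℝ) ≤ c := Real.rpow_nonneg (by norm_num) _
    have hble : ∀ ζ:ℂ, ‖ζ‖^Nb ≤ 1/3 → ‖ζ‖ ≤ c := by
      intro ζ h
      have h1 : ((‖ζ‖ ^ Nb : ℝ)) ^ ((Nb:ℝ))⁻¹ ≤ (1/3:ℝ) ^ ((Nb:ℝ))⁻¹ :=
        Real.rpow_le_rpow (by positivity) h (by positivity)
      rw [← Real.rpow_natCast ‖ζ‖ Nb, ← Real.rpow_mul (norm_nonneg _),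
        mul_inv_cancel₀ hNbR.ne', Real.rpow_one] at h1
      exact h1
    have hsub : {ζ : ℂ | ζ ∈ ball (0:ℂ) 1 ∧ f ζ ∈ K} =
        Metric.closedBall (0:ℂ) c ∩ f ⁻¹' K := by
      ext ζ
      simp only [Set.mem_setOf_eq, Metric.mem_ball, Metric.mem_closedBall, dist_zero_right,
        Set.mem_inter_iff, Set.mem_preimage]
      constructor
      · rintro ⟨h1, h2⟩
        exact ⟨hble ζ (hmain ζ h1 h2), h2⟩
      · rintro ⟨h1, h2⟩
        exact ⟨lt_of_le_of_lt h1 hc1, h2⟩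
    rw [hsub]
    have hfc : ContinuousOn f (Metric.closedBall 0 c) :=
      (hfdiff.continuousOn).mono (closedBall_subset_ball hc1)
    exact IsCompact.of_isClosed_subset (isCompact_closedBall _ _)
      (hfc.preimage_isClosed_of_isClosed Metric.isClosed_closedBall hK.isClosed)
      Set.inter_subset_left
  · -- f 0 = p
    have hg0 : g 0 = fun i => p i := by
      funext i
      fin_cases i
      · simp [hgdef, hAf0]
      · simp [hgdef, hAf0, hBf0, hq2def]
    rw [hfdef]
    show e.symm (g 0) = p
    rw [hg0]
    rfl
  · -- deriv
    have hg2der : HasDerivAt (fun ζ => φ (Af ζ) + q2 * Complex.exp (Bf ζ)) (v 1) 0 := by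
      have h1 : HasDerivAt φ (deriv φ (Af 0)) (Af 0) := (hφ (Af 0)).hasDerivAt
      have h2 := h1.comp 0 hAder
      have h3 : HasDerivAt (fun ζ => q2 * Complex.exp (Bf ζ))
          (q2 * (Complex.exp (Bf 0) * b1)) 0 := (hBder.cexp).const_mul q2
      have h4 := h2.add h3
      have h5 : deriv φ (Af 0) * (v 0) + q2 * (Complex.exp (Bf 0) * b1) = v 1 := by
        rw [hAf0, hBf0, Complex.exp_zero, one_mul, hb1def]
        field_simp
        ring
      rw [h5] at h4
      have h6 : (φ ∘ Af) = fun ζ => φ (Af ζ) := rfl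
      rw [h6] at h4
      exact h4
    have hgder : HasDerivAt g ![v 0, v 1] 0 := by
      rw [hasDerivAt_pi]
      intro i
      fin_cases i
      · show HasDerivAt (fun x => g x 0) (v 0) 0
        have h0 : (fun x => g x 0) = Af := by funext x; simp [hgdef]
        rw [h0]
        exact hAder
      · show HasDerivAt (fun x => g x 1) (v 1) 0
        have h1 : (fun x => g x 1) = fun x => φ (Af x) + q2 * Complex.exp (Bf x) := by
          funext x; simp [hgdef]
        rw [h1]
        exact hg2der
    have hfder : HasDerivAt f (e.symm ![v 0, v 1]) 0 := by
      have h2 := (e.symm.toContinuousLinearMap.hasFDerivAt).comp 0 hgder.hasFDerivAt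
      have h3 := h2.hasDerivAt
      exact e.symm.hasFDerivAt.comp_hasDerivAt 0 hgder
    rw [hfder.deriv, one_smul]
    ext i
    fin_cases i <;> rfl
  · -- avoidance
    intro ζ hζ hmem
    rw [hΓ] at hmem
    have h : (f ζ) 1 = φ ((f ζ) 0) := hmem
    rw [hf1c ζ, hf0c ζ] at h
    have h2 : q2 * Complex.exp (Bf ζ) = 0 := by linear_combination h
    exact mul_ne_zero hq2 (Complex.exp_ne_zero (Bf ζ)) h2
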